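/- Let C be a braided Z_q-extension of a pointed fusion category (q prime) that is not pointed. Then every simple object of C has Frobenius-Perron dimension 1 or α, where α is the smallest FP dimension greater than 1 of a simple object, and the adjoint subcategory C_ad is pointed of FP dimension α². -/

import Mathlib

/-!
A Grothendieck-ring (fusion ring) level formalization of fusion categories.
`Fin n` indexes the isomorphism classes of simple objects, `N i j k` is the
multiplicity of the simple `k` in the tensor product `i ⊗ j`, `dim` records the
Frobenius–Perron dimensions of the simple objects.
-/

/-- The Grothendieck-ring data of a fusion category. -/
structure FusionData where
  n : ℕ
  npos : 0 < n
  one : Fin n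
  dual : Fin n → Fin n
  N : Fin n → Fin n → Fin n → ℕ
  dim : Fin n → ℝ
  dim_ge_one : ∀ i, 1 ≤ dim i
  dim_one : dim one = 1
  dim_dual : ∀ i, dim (dual i) = dim i
  dim_mul : ∀ i j, dim i * dim j = ∑ k, (N i j k : ℝ) * dim k
  N_one_left : ∀ i k, N one i k = if k = i then 1 else 0
  N_one_right : ∀ i k, N i one k = if k = i then 1 else 0
  N_dual : ∀ i j, N i j one = if j = dual i then 1 else 0
  dual_dual : ∀ i, dual (dual i) = i
  N_assoc : ∀ i j k l, ∑ m, N i j m * N m k l = ∑ m, N j k m * N i m l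

namespace FusionData

/-- The index type of (iso classes of) simple objects. -/
abbrev I (C : FusionData) : Type := Fin C.n

/-- A simple object is invertible iff its FP dimension is `1`. -/
def Invertible (C : FusionData) (i : C.I) : Prop := C.dim i = 1

/-- A fusion category is pointed if all its simple objects are invertible. -/
def Pointed (C : FusionData) : Prop := ∀ i : C.I, C.dim i = 1

/-- The Frobenius–Perron dimension of the category. -/
noncomputable def FPdim (C : FusionData) : ℝ := ∑ i : C.I, C.dim i ^ 2

open Classical in
/-- The FP dimension of the full subcategory spanned by a set of simples. -/
noncomputable def FPdimSet (C : FusionData) (S : Set C.I) : ℝ :=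
  ∑ i : C.I, if i ∈ S then C.dim i ^ 2 else 0

open Classical in
/-- The number of iso classes of invertible objects, i.e. the order of `G(C)`. -/
noncomputable def numInv (C : FusionData) : ℕ :=
  (Finset.univ.filter fun i : C.I => C.dim i = 1).card

/-- A fusion subcategory: a set of simples containing the unit and closed under
duals and under taking simple constituents of tensor products. -/
structure Sub (C : FusionData) where
  carrier : Set C.I
  one_mem : C.one ∈ carrier
  dual_mem : ∀ i ∈ carrier, C.dual i ∈ carrier
  mul_mem : ∀ i ∈ carrier, ∀ j ∈ carrier, ∀ k, 0 < C.N i j k → k ∈ carrier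

/-- The simples of the fusion subcategory generated by a set `S` of simples. -/
inductive gen (C : FusionData) (S : Set C.I) : C.I → Prop
  | base {i} : i ∈ S → gen C S i
  | one : gen C S C.one
  | dual {i} : gen C S i → gen C S (C.dual i)
  | mul {i j k} : gen C S i → gen C S j → 0 < C.N i j k → gen C S k

/-- Simple constituents of the objects `X ⊗ X⋆`, `X` simple. -/
def adjointGenerators (C : FusionData) : Set C.I := {k | ∃ i, 0 < C.N i (C.dual i) k}

/-- The set of simple objects of the adjoint subcategory `C_ad`. -/
def adSet (C : FusionData) : Set C.I := {k | C.gen C.adjointGenerators k}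

/-- The set of simples of `C_pt`, the largest pointed fusion subcategory. -/
def ptSet (C : FusionData) : Set C.I := {i | C.dim i = 1}

/-- The ring-level shadow of a braiding: the Grothendieck ring of a braided
fusion category is commutative. -/
def Braided (C : FusionData) : Prop := ∀ i j k, C.N i j k = C.N j i k

/-- Integrality: every simple object has integer FP dimension. -/
def Integral (C : FusionData) : Prop := ∀ i : C.I, ∃ m : ℕ, C.dim i = (m : ℝ)

/-- Generalized Tambara–Yamagami: non-pointed, and the tensor product of any
two non-invertible simples is a direct sum of invertibles. -/
def GeneralizedTY (C : FusionData) : Prop :=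
  ¬ C.Pointed ∧ ∀ i j : C.I, C.dim i ≠ 1 → C.dim j ≠ 1 →
    ∀ k, 0 < C.N i j k → C.dim k = 1

/-- A grading of `C` by a group `G`. -/
structure Grading (C : FusionData) (G : Type*) [Group G] where
  deg : C.I → G
  deg_one : deg C.one = 1
  deg_mul : ∀ i j k, 0 < C.N i j k → deg k = deg i * deg j
  deg_dual : ∀ i, deg (C.dual i) = (deg i)⁻¹

/-- A grading is faithful if every component is nonzero, equivalently the
degree map is surjective. -/
def Grading.Faithful {C : FusionData} {G : Type*} [Group G] (g : C.Grading G) : Prop :=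
  Function.Surjective g.deg

/-- A `ℤ_q`-extension of a pointed fusion category: a faithful `ℤ_q`-grading
whose trivial component is pointed. -/
structure ZqExtension (C : FusionData) (q : ℕ) where
  grading : C.Grading (Multiplicative (ZMod q))
  faithful : Function.Surjective grading.deg
  trivial_pointed : ∀ i, grading.deg i = 1 → C.dim i = 1

/-- `C` is tensor equivalent to the Deligne product `B ⊠ E`. -/
def IsDeligneProd (C B E : FusionData) : Prop :=
  ∃ e : C.I ≃ B.I × E.I,
    e C.one = (B.one, E.one) ∧
    (∀ i, e (C.dual i) = (B.dual (e i).1, E.dual (e i).2)) ∧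
    (∀ i j k, C.N i j k = B.N (e i).1 (e j).1 (e k).1 * E.N (e i).2 (e j).2 (e k).2) ∧
    (∀ i, C.dim i = B.dim (e i).1 * E.dim (e i).2)

/-- `C` is tensor equivalent to the Deligne product of the finite family `F`. -/
def IsDelignePi (C : FusionData) {t : ℕ} (F : Fin t → FusionData) : Prop :=
  ∃ e : C.I ≃ ∀ s, (F s).I,
    (e C.one = fun s => (F s).one) ∧
    (∀ i s, e (C.dual i) s = (F s).dual (e i s)) ∧
    (∀ i j k, C.N i j k = ∏ s, (F s).N (e i s) (e j s) (e k s)) ∧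
    (∀ i, C.dim i = ∏ s, (F s).dim (e i s))

/-- A fusion category of type `(1, m; α, n)`: `m` invertible simples, `n`
simples of FP dimension `α > 1`, and no others. -/
def OfType₂ (C : FusionData) (α : ℝ) (m n : ℕ) : Prop :=
  1 < α ∧ (∀ i : C.I, C.dim i = 1 ∨ C.dim i = α) ∧
    Nat.card {i : C.I // C.dim i = 1} = m ∧ Nat.card {i : C.I // C.dim i = α} = n

/-- An Ising category: three simples `1, g, X` with `g` invertible, `g ≠ 1`,
`FPdim X = √2` and `X ⊗ X ≅ 1 ⊕ g`. -/
def IsIsing (C : FusionData) : Prop :=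
  C.n = 3 ∧ ¬ C.Pointed ∧ C.FPdim = 4 ∧
    ∃ g X : C.I, g ≠ C.one ∧ C.dim g = 1 ∧ C.dim X = Real.sqrt 2 ∧ C.dual X = X ∧
      C.N X X C.one = 1 ∧ C.N X X g = 1 ∧ ∀ k, 0 < C.N X X k → k = C.one ∨ k = g

/-- Modularity at the Grothendieck-ring level: braided together with a
symmetric nondegenerate S-matrix satisfying the Verlinde relations and
normalized by FP dimensions on the row of the unit. -/
def Modular (C : FusionData) : Prop :=
  C.Braided ∧
    ∃ s : Matrix C.I C.I ℂ,
      (∀ i j, s i j = s j i) ∧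
      (∀ i, s C.one i = (C.dim i : ℂ)) ∧
      (∀ i j k, s i j * s i k = (C.dim i : ℂ) * ∑ l, (C.N j k l : ℂ) * s i l) ∧
      IsUnit s

/-- A ring-level Morita context between two fusion categories: a based
`(C, D)`-bimodule with commuting indecomposable actions and equal global
FP dimensions. -/
structure MoritaContext (C D : FusionData) where
  m : ℕ
  actL : C.I → Fin m → Fin m → ℕ
  actR : D.I → Fin m → Fin m → ℕ
  actL_one : ∀ x y, actL C.one x y = if y = x then 1 else 0
  actR_one : ∀ x y, actR D.one x y = if y = x then 1 else 0
  actL_assoc : ∀ i j x z, (∑ k, C.N i j k * actL k x z) = ∑ y, actL j x y * actL i y z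
  actR_assoc : ∀ i j x z, (∑ k, D.N i j k * actR k x z) = ∑ y, actR i x y * actR j y z
  commute : ∀ i j x z, (∑ y, actL i x y * actR j y z) = ∑ y, actR j x y * actL i y z
  indecL : ∀ x y, ∃ i, 0 < actL i x y
  indecR : ∀ x y, ∃ j, 0 < actR j x y
  fpdim_eq : C.FPdim = D.FPdim

/-- (Categorical) Morita equivalence, encoded at the ring level. -/
def MoritaEquiv (C D : FusionData) : Prop := Nonempty (MoritaContext C D)

/-- Group-theoretical: Morita equivalent to a pointed fusion category. -/
def GroupTheoretical (C : FusionData) : Prop :=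
  ∃ D : FusionData, D.Pointed ∧ MoritaEquiv C D

end FusionData

/-!
Since the trivial component is pointed, every `X ⊗ X⋆` is a sum of invertibles, so the invertibles
`g` with `g ⊗ X ≅ X` form a group `Stab X` of order `FPdim(X)²`, and the invertibles act
transitively on the simples of each degree; by commutativity `Stab` is constant on these orbits.
An invertible of nontrivial degree would generate `ℤ_q`, making every component pointed; hence the
invertibles are exactly the trivial component, and every simple of nontrivial degree has dimension
at least `α`.

Let `X, Y` have dimension `α`, the same stabilizer `T`, and `deg X + deg Y ≠ 0`. Commutativity
makes the multiplicity of `1` in `(X ⊗ Y) ⊗ (X⋆ ⊗ Y⋆)` equal to that in `(X ⊗ X⋆) ⊗ (Y ⊗ Y⋆)`,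
namely `|T| = α²`; since `X ⊗ Y` and `X⋆ ⊗ Y⋆` have at most `α` constituents each, `X ⊗ Y ≅ α Z`
for one simple `Z` of dimension `α`. As `T` permutes the constituents of `X ⊗ Y`, `T ⊆ Stab Z`,
and equality follows by counting. So the degrees whose simples have dimension `α` and stabilizer
`T`, together with `0`, form a nontrivial subgroup of `ℤ_q`, i.e. all of it; and `C_ad` is the
pointed subcategory `T`.
-/

section Counting

open Finset

variable {ι : Type*} [Fintype ι]

lemma eq_ite_of_sum_mul_eq_one [DecidableEq ι] {f g : ι → ℕ}
    (h : ∑ i, f i * g i = 1) (hfg : ∀ i, 0 < f i → 0 < g i) {a : ι} (ha : 0 < f a) (i : ι) :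
    f i = if i = a then 1 else 0 := by
  have hterm : ∀ i, 0 < f i → f i ≤ f i * g i := fun i hi => Nat.le_mul_of_pos_right _ (hfg i hi)
  split_ifs with hia
  · subst hia
    have := single_le_sum (fun j _ => Nat.zero_le (f j * g j)) (mem_univ i)
    have := hterm i ha
    omega
  · by_contra hi
    have := add_le_sum (f := fun j => f j * g j) (fun j _ => Nat.zero_le _) (mem_univ i)
      (mem_univ a) hia
    have := hterm i (Nat.pos_of_ne_zero hi)
    have := hterm a ha
    omega

lemma natCast_sum_le_of_sum_mul_eq_sq {f : ι → ℕ} {w : ι → ℝ} {a : ℝ} (ha : 0 < a)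
    (hw : ∀ i, 0 < f i → a ≤ w i) (h : ∑ i, (f i : ℝ) * w i = a ^ 2) :
    ((∑ i, f i : ℕ) : ℝ) ≤ a := by
  refine le_of_mul_le_mul_right ?_ ha
  rw [← sq, ← h, Nat.cast_sum, sum_mul]
  refine sum_le_sum fun i _ => ?_
  rcases (f i).eq_zero_or_pos with hi | hi
  · simp [hi]
  · exact mul_le_mul_of_nonneg_left (hw i hi) (Nat.cast_nonneg _)

lemma exists_eq_and_eq_zero_of_sum_mul_eq_sq {ν μ : ι → ℕ} {a : ℝ} (ha : 0 < a)
    (hν : ((∑ i, ν i : ℕ) : ℝ) ≤ a) (hμ : ((∑ i, μ i : ℕ) : ℝ) ≤ a)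
    (h : ((∑ i, ν i * μ i : ℕ) : ℝ) = a ^ 2) :
    ∃ i₀, (ν i₀ : ℝ) = a ∧ ∀ i ≠ i₀, ν i = 0 := by
  set A := ∑ i, ν i
  set B := ∑ i, μ i
  have hle : ∀ i ∈ univ, ν i * μ i ≤ ν i * B := fun i _ =>
    Nat.mul_le_mul_left _ (single_le_sum (fun j _ => Nat.zero_le (μ j)) (mem_univ i))
  have hdiag : ∑ i, ν i * μ i ≤ A * B := (sum_le_sum hle).trans_eq (sum_mul ..).symm
  have hAB : (A : ℝ) * B = a ^ 2 := by
    refine le_antisymm (by nlinarith [mul_le_mul hν hμ (Nat.cast_nonneg _) ha.le]) ?_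
    rw [← h]
    exact_mod_cast hdiag
  have hA : (A : ℝ) = a := by
    nlinarith [mul_le_mul_of_nonneg_left hμ (Nat.cast_nonneg A), (Nat.cast_nonneg B : (0 : ℝ) ≤ _)]
  have hB : B ≠ 0 := by
    rintro hB
    rw [hB, Nat.cast_zero, mul_zero] at hAB
    exact (pow_pos ha 2).ne hAB
  have htight : ∀ i, ν i * μ i = ν i * B := by
    have hsum : ∑ i, ν i * μ i = ∑ i, ν i * B := by
      rw [← sum_mul]
      exact_mod_cast h.trans hAB.symm
    exact fun i => (sum_eq_sum_iff_of_le hle).1 hsum i (mem_univ i)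
  have hA0 : A ≠ 0 := by
    rintro hA0
    rw [hA0, Nat.cast_zero] at hA
    exact ha.ne hA
  obtain ⟨i₀, -, hi₀⟩ := exists_ne_zero_of_sum_ne_zero hA0
  have hzero : ∀ i ≠ i₀, ν i = 0 := by
    intro i hi
    by_contra hνi
    have hμ_eq : ∀ j, ν j ≠ 0 → μ j = B := fun j hj =>
      Nat.eq_of_mul_eq_mul_left (Nat.pos_of_ne_zero hj) (htight j)
    have := add_le_sum (f := μ) (fun j _ => Nat.zero_le _) (mem_univ i) (mem_univ i₀) hi
    rw [hμ_eq i hνi, hμ_eq i₀ hi₀] at this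
    omega
  refine ⟨i₀, ?_, hzero⟩
  rw [← hA]
  exact_mod_cast (sum_eq_single i₀ (fun i _ hi => hzero i hi) (by simp)).symm

end Counting

namespace FusionData

open Finset

variable {C : FusionData}

lemma dim_pos (i : C.I) : 0 < C.dim i := one_pos.trans_le (C.dim_ge_one i)

lemma N_one_dual (i j : C.I) : C.N i j C.one = if i = C.dual j then 1 else 0 := by
  rw [C.N_dual]
  exact if_congr ⟨fun h => by rw [h, C.dual_dual], fun h => by rw [h, C.dual_dual]⟩ rfl rfl

lemma exists_N_pos (i j : C.I) : ∃ k, 0 < C.N i j k := by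
  by_contra! h
  have hsum := C.dim_mul i j
  simp only [fun k => Nat.le_zero.mp (h k), Nat.cast_zero, zero_mul, sum_const_zero] at hsum
  exact (mul_pos (dim_pos i) (dim_pos j)).ne' hsum

lemma N_rotate (i j k : C.I) : C.N i j (C.dual k) = C.N j k (C.dual i) := by
  calc C.N i j (C.dual k) = ∑ m, C.N i j m * C.N m k C.one := by simp [N_one_dual]
    _ = ∑ m, C.N j k m * C.N i m C.one := C.N_assoc i j k C.one
    _ = C.N j k (C.dual i) := by simp [C.N_dual]

lemma N_dual_right (X Y g : C.I) : C.N X (C.dual Y) g = C.N (C.dual g) X Y := by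
  rw [← C.dual_dual g, N_rotate, N_rotate, C.dual_dual, C.dual_dual]

lemma eq_zero_of_sum_mul_dim_eq_one {f : C.I → ℕ} (hsum : ∑ k, (f k : ℝ) * C.dim k = 1)
    (hone : f C.one = 1) {m : C.I} (hm : m ≠ C.one) : f m = 0 := by
  have h := add_le_sum (f := fun k => (f k : ℝ) * C.dim k) (s := univ)
    (fun k _ => mul_nonneg (Nat.cast_nonneg _) (dim_pos k).le) (mem_univ C.one) (mem_univ m)
    hm.symm
  simp only [hone, C.dim_one, hsum, Nat.cast_one, mul_one] at h
  have hm := dim_pos m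
  have hfm : (f m : ℝ) = 0 := by nlinarith [(Nat.cast_nonneg (f m) : (0 : ℝ) ≤ _)]
  exact_mod_cast hfm

lemma N_dual_self_eq_of_dim_eq_one {h : C.I} (hh : C.dim h = 1) (m : C.I) :
    C.N (C.dual h) h m = if m = C.one then 1 else 0 := by
  have hone : C.N (C.dual h) h C.one = 1 := by simp [C.N_dual, C.dual_dual]
  have hsum : ∑ k, (C.N (C.dual h) h k : ℝ) * C.dim k = 1 := by
    rw [← C.dim_mul, C.dim_dual, hh, mul_one]
  split_ifs with hm
  · rwa [hm]
  · exact eq_zero_of_sum_mul_dim_eq_one hsum hone hm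

lemma sum_N_mul_N_dual_left {h : C.I} (hh : C.dim h = 1) (X l : C.I) :
    ∑ m, C.N h X m * C.N (C.dual h) m l = if l = X then 1 else 0 := by
  rw [← C.N_assoc]
  simp [N_dual_self_eq_of_dim_eq_one hh, C.N_one_left]

/-- A simple constituent of `g ⊗ X`; the only one when `g` is invertible. -/
noncomputable def act (C : FusionData) (g X : C.I) : C.I := (exists_N_pos g X).choose

lemma N_act_pos (g X : C.I) : 0 < C.N g X (C.act g X) := (exists_N_pos g X).choose_spec

section Invertible

variable {h : C.I} (hh : C.dim h = 1)
include hh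

lemma N_eq_ite_act (X m : C.I) : C.N h X m = if m = C.act h X then 1 else 0 := by
  refine eq_ite_of_sum_mul_eq_one (g := fun m => C.N (C.dual h) m X)
    (by simpa using sum_N_mul_N_dual_left hh X X) (fun m hm => ?_) (N_act_pos h X) m
  -- `h⋆ ⊗ (h ⊗ X) ≅ X`, so every constituent of `h⋆ ⊗ m` is `X`
  obtain ⟨l, hl⟩ := exists_N_pos (C.dual h) m
  obtain rfl : l = X := by
    by_contra hlX
    have h0 := sum_N_mul_N_dual_left hh X l
    rw [if_neg hlX, sum_eq_zero_iff] at h0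
    rcases Nat.mul_eq_zero.mp (h0 m (mem_univ m)) with h1 | h1 <;> omega
  exact hl

lemma eq_act_of_N_pos {X m : C.I} (hm : 0 < C.N h X m) : m = C.act h X := by
  by_contra hne
  rw [N_eq_ite_act hh, if_neg hne] at hm
  exact hm.ne rfl

lemma dim_act (X : C.I) : C.dim (C.act h X) = C.dim X := by
  have := C.dim_mul h X
  simp only [hh, one_mul, N_eq_ite_act hh, Nat.cast_ite, Nat.cast_one, Nat.cast_zero, ite_mul,
    one_mul, zero_mul, sum_ite_eq', mem_univ, if_true] at this
  exact this.symm

lemma act_dual_act (X : C.I) : C.act (C.dual h) (C.act h X) = X := by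
  have h1 := sum_N_mul_N_dual_left hh X X
  simp only [N_eq_ite_act hh, ite_mul, one_mul, zero_mul, sum_ite_eq', mem_univ, if_true] at h1
  exact (eq_act_of_N_pos (by rwa [C.dim_dual]) (by rw [h1]; simp)).symm

lemma act_injective : Function.Injective (C.act h) := fun X Y hXY => by
  rw [← act_dual_act hh X, hXY, act_dual_act hh]

end Invertible

lemma act_act_dual {h : C.I} (hh : C.dim h = 1) (X : C.I) : C.act h (C.act (C.dual h) X) = X := by
  simpa [C.dual_dual] using act_dual_act (h := C.dual h) (by rwa [C.dim_dual]) X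

lemma act_one (X : C.I) : C.act C.one X = X := by
  simpa using (eq_act_of_N_pos C.dim_one (m := X) (by simp [C.N_one_left])).symm

lemma act_act {g h : C.I} (hg : C.dim g = 1) (hh : C.dim h = 1) (X : C.I) :
    C.act (C.act g h) X = C.act g (C.act h X) := by
  have ha := C.N_assoc g h X (C.act g (C.act h X))
  simp only [N_eq_ite_act hg, N_eq_ite_act hh, ite_mul, one_mul, zero_mul, sum_ite_eq', mem_univ,
    if_pos] at ha
  exact (eq_act_of_N_pos (by rwa [dim_act hg]) (by rw [ha]; simp)).symm

lemma act_comm (hbr : C.Braided) (g : C.I) {h : C.I} (hh : C.dim h = 1) :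
    C.act g h = C.act h g :=
  eq_act_of_N_pos hh (by rw [← hbr]; exact N_act_pos g h)

open Classical in
noncomputable def stabilizer (C : FusionData) (X : C.I) : Finset C.I :=
  univ.filter fun g => C.dim g = 1 ∧ C.act g X = X

lemma mem_stabilizer {X g : C.I} : g ∈ C.stabilizer X ↔ C.dim g = 1 ∧ C.act g X = X := by
  simp [stabilizer]

lemma one_mem_stabilizer (X : C.I) : C.one ∈ C.stabilizer X :=
  mem_stabilizer.2 ⟨C.dim_one, act_one X⟩

lemma act_mem_stabilizer {X g h : C.I} (hg : g ∈ C.stabilizer X) (hh : h ∈ C.stabilizer X) :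
    C.act g h ∈ C.stabilizer X := by
  rw [mem_stabilizer] at *
  exact ⟨by rw [dim_act hg.1, hh.1], by rw [act_act hg.1 hh.1, hh.2, hg.2]⟩

lemma dual_mem_stabilizer_of_mem {X g : C.I} (hg : g ∈ C.stabilizer X) :
    C.dual g ∈ C.stabilizer X := by
  rw [mem_stabilizer] at *
  refine ⟨by rw [C.dim_dual, hg.1], ?_⟩
  conv_lhs => rw [← hg.2]
  exact act_dual_act hg.1 X

lemma dual_mem_stabilizer {X g : C.I} : C.dual g ∈ C.stabilizer X ↔ g ∈ C.stabilizer X :=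
  ⟨fun hg => C.dual_dual g ▸ dual_mem_stabilizer_of_mem hg, dual_mem_stabilizer_of_mem⟩

lemma stabilizer_act (hbr : C.Braided) {g : C.I} (hg : C.dim g = 1) (X : C.I) :
    C.stabilizer (C.act g X) = C.stabilizer X := by
  ext h
  simp only [mem_stabilizer, and_congr_right_iff]
  intro hh
  rw [← act_act hh hg, act_comm hbr h hg, act_act hg hh, (act_injective hg).eq_iff]

lemma dim_of_mem_stabilizer {X g : C.I} (hg : g ∈ C.stabilizer X) : C.dim g = 1 :=
  (mem_stabilizer.1 hg).1

section Adjoint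

variable {X : C.I} (hX : ∀ g, 0 < C.N X (C.dual X) g → C.dim g = 1)
include hX

lemma N_self_dual_eq (g : C.I) :
    C.N X (C.dual X) g = if g ∈ C.stabilizer X then 1 else 0 := by
  by_cases hg : C.dim g = 1
  · have hg' : C.dim (C.dual g) = 1 := by rw [C.dim_dual, hg]
    rw [N_dual_right, N_eq_ite_act hg']
    by_cases hs : g ∈ C.stabilizer X
    · have hgX : C.act (C.dual g) X = X := by
        conv_lhs => rw [← (mem_stabilizer.1 hs).2]
        exact act_dual_act hg X
      rw [if_pos hgX.symm, if_pos hs]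
    · refine (if_neg fun hgX => hs (mem_stabilizer.2 ⟨hg, ?_⟩)).trans (if_neg hs).symm
      conv_lhs => rw [hgX]
      exact act_act_dual hg X
  · rw [if_neg fun h => hg (dim_of_mem_stabilizer h)]
    exact Nat.eq_zero_of_not_pos fun h => hg (hX g h)

lemma N_self_dual_pos_iff {g : C.I} : 0 < C.N X (C.dual X) g ↔ g ∈ C.stabilizer X := by
  rw [N_self_dual_eq hX]
  split_ifs with h <;> simp [h]

lemma sq_dim_eq_card_stabilizer : C.dim X ^ 2 = (C.stabilizer X).card := by
  have hdim := C.dim_mul X (C.dual X)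
  rw [C.dim_dual] at hdim
  calc C.dim X ^ 2 = ∑ g, if g ∈ C.stabilizer X then (1 : ℝ) else 0 := by
        rw [sq, hdim]
        refine sum_congr rfl fun g _ => ?_
        rw [N_self_dual_eq hX]
        split_ifs with h
        · simp [dim_of_mem_stabilizer h]
        · simp
    _ = (C.stabilizer X).card := by simp

end Adjoint

lemma stabilizer_eq_singleton_one {X : C.I} (hX : ∀ g, 0 < C.N X (C.dual X) g → C.dim g = 1)
    (hX1 : C.dim X = 1) : C.stabilizer X = {C.one} := by
  have hcard : (C.stabilizer X).card = 1 := by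
    have := sq_dim_eq_card_stabilizer hX
    rw [hX1, one_pow] at this
    exact_mod_cast this.symm
  obtain ⟨a, ha⟩ := card_eq_one.1 hcard
  have h1 : C.one ∈ ({a} : Finset C.I) := ha ▸ one_mem_stabilizer X
  rw [ha, mem_singleton.1 h1]

lemma stabilizer_dual (hbr : C.Braided) (hadj : C.adjointGenerators ⊆ C.ptSet) (X : C.I) :
    C.stabilizer (C.dual X) = C.stabilizer X := by
  ext g
  rw [← N_self_dual_pos_iff fun g hg => hadj ⟨_, hg⟩,
    ← N_self_dual_pos_iff fun g hg => hadj ⟨_, hg⟩, C.dual_dual, hbr]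

lemma N_pos_act_of_mem_stabilizer {X Y Z g : C.I} (hg : g ∈ C.stabilizer X)
    (hZ : 0 < C.N X Y Z) : 0 < C.N X Y (C.act g Z) := by
  obtain ⟨hg1, hgX⟩ := mem_stabilizer.1 hg
  have ha := C.N_assoc g X Y (C.act g Z)
  simp only [N_eq_ite_act hg1, ite_mul, one_mul, zero_mul, sum_ite_eq', mem_univ, if_true,
    hgX] at ha
  rw [ha]
  exact sum_pos' (fun _ _ => Nat.zero_le _) ⟨Z, mem_univ Z, by simpa using hZ⟩

/-- The fusion matrix of `i`: the matrix of `i ⊗ -` acting on row vectors of multiplicities. -/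
def fusionMatrix (C : FusionData) (i : C.I) : Matrix C.I C.I ℕ := Matrix.of fun a b => C.N i a b

lemma fusionMatrix_mul_fusionMatrix (i j : C.I) :
    C.fusionMatrix j * C.fusionMatrix i = ∑ m, C.N i j m • C.fusionMatrix m := by
  ext a b
  simp [fusionMatrix, Matrix.mul_apply, Matrix.sum_apply, C.N_assoc i j a b]

lemma fusionMatrix_commute (hbr : C.Braided) (i j : C.I) :
    Commute (C.fusionMatrix i) (C.fusionMatrix j) := by
  simp only [Commute, SemiconjBy, fusionMatrix_mul_fusionMatrix, hbr i j]

lemma fusionMatrix_mul_apply_one_one (a b c d : C.I) :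
    (C.fusionMatrix b * C.fusionMatrix a * (C.fusionMatrix d * C.fusionMatrix c)) C.one C.one =
      ∑ k, C.N a b k * C.N c d (C.dual k) := by
  have hone : ∀ i j, (C.fusionMatrix i * C.fusionMatrix j) C.one C.one = C.N j i C.one := by
    simp [fusionMatrix, Matrix.mul_apply, C.N_one_right]
  rw [fusionMatrix_mul_fusionMatrix, fusionMatrix_mul_fusionMatrix, sum_mul_sum, Matrix.sum_apply]
  refine sum_congr rfl fun k _ => ?_
  simp only [Matrix.sum_apply, smul_mul_smul_comm, Matrix.smul_apply, hone, N_one_dual, smul_eq_mul,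
    mul_ite, mul_one, mul_zero, sum_ite_eq', mem_univ, if_true]

/-- Commutativity of the fusion ring: the multiplicity of `1` in `(X ⊗ Y) ⊗ (X⋆ ⊗ Y⋆)` equals
that in `(X ⊗ X⋆) ⊗ (Y ⊗ Y⋆)`. -/
lemma sum_N_mul_N_dual_eq (hbr : C.Braided) (X Y : C.I) :
    ∑ m, C.N X Y m * C.N (C.dual X) (C.dual Y) (C.dual m) =
      ∑ g, C.N X (C.dual X) g * C.N Y (C.dual Y) (C.dual g) := by
  rw [← fusionMatrix_mul_apply_one_one, ← fusionMatrix_mul_apply_one_one,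
    fusionMatrix_commute hbr Y X, fusionMatrix_commute hbr (C.dual Y) (C.dual X),
    (fusionMatrix_commute hbr Y (C.dual X)).mul_mul_mul_comm, fusionMatrix_commute hbr X,
    fusionMatrix_commute hbr Y]

theorem exists_N_pos_dim_eq_stabilizer_eq (hbr : C.Braided)
    (hadj : C.adjointGenerators ⊆ C.ptSet) {X Y : C.I} (hdim : C.dim Y = C.dim X)
    (hstab : C.stabilizer Y = C.stabilizer X)
    (hXY : ∀ m, 0 < C.N X Y m → C.dim X ≤ C.dim m)
    (hXY' : ∀ m, 0 < C.N (C.dual X) (C.dual Y) m → C.dim X ≤ C.dim m) :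
    ∃ Z, 0 < C.N X Y Z ∧ C.dim Z = C.dim X ∧ C.stabilizer Z = C.stabilizer X := by
  have hadj' : ∀ W g, 0 < C.N W (C.dual W) g → C.dim g = 1 := fun W g hg => hadj ⟨W, hg⟩
  have hcard := sq_dim_eq_card_stabilizer (hadj' X)
  have hν : ∑ m, (C.N X Y m : ℝ) * C.dim m = C.dim X ^ 2 := by rw [← C.dim_mul, hdim, sq]
  have hμ : ∑ m, (C.N (C.dual X) (C.dual Y) (C.dual m) : ℝ) * C.dim m = C.dim X ^ 2 := by
    calc ∑ m, (C.N (C.dual X) (C.dual Y) (C.dual m) : ℝ) * C.dim m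
        = ∑ m, (C.N (C.dual X) (C.dual Y) (C.dual m) : ℝ) * C.dim (C.dual m) := by
          simp only [C.dim_dual]
      _ = ∑ j, (C.N (C.dual X) (C.dual Y) j : ℝ) * C.dim j :=
          Equiv.sum_comp (Function.Involutive.toPerm _ C.dual_dual)
            fun j => (C.N (C.dual X) (C.dual Y) j : ℝ) * C.dim j
      _ = C.dim X ^ 2 := by rw [← C.dim_mul, C.dim_dual, C.dim_dual, hdim, sq]
  have hcount : ∑ m, C.N X Y m * C.N (C.dual X) (C.dual Y) (C.dual m) =
      (C.stabilizer X).card := by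
    simp [sum_N_mul_N_dual_eq hbr, N_self_dual_eq (hadj' X), N_self_dual_eq (hadj' Y), hstab,
      dual_mem_stabilizer]
  obtain ⟨Z, hZ, hother⟩ := exists_eq_and_eq_zero_of_sum_mul_eq_sq (dim_pos X)
    (natCast_sum_le_of_sum_mul_eq_sq (dim_pos X) hXY hν)
    (natCast_sum_le_of_sum_mul_eq_sq (dim_pos X)
      (fun m hm => C.dim_dual m ▸ hXY' _ hm) hμ)
    (by rw [hcount, hcard])
  have hZpos : 0 < C.N X Y Z := by exact_mod_cast hZ ▸ dim_pos X
  have hZdim : C.dim Z = C.dim X := by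
    rw [sum_eq_single Z (fun m _ hm => by simp [hother m hm]) (by simp), hZ, sq] at hν
    exact mul_left_cancel₀ (dim_pos X).ne' hν
  have hsub : C.stabilizer X ⊆ C.stabilizer Z := fun g hg =>
    mem_stabilizer.2 ⟨dim_of_mem_stabilizer hg, by_contra fun h =>
      (N_pos_act_of_mem_stabilizer hg hZpos).ne' (hother _ h)⟩
  refine ⟨Z, hZpos, hZdim, (eq_of_subset_of_card_le hsub ?_).symm⟩
  have hcardZ := sq_dim_eq_card_stabilizer (hadj' Z)
  rw [hZdim, hcard] at hcardZ
  exact_mod_cast hcardZ.ge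

section Graded

variable {G : Type*} [Group G]

lemma Grading.deg_act (gr : C.Grading G) (g X : C.I) :
    gr.deg (C.act g X) = gr.deg g * gr.deg X :=
  gr.deg_mul g X _ (N_act_pos g X)

lemma Grading.deg_eq_one_of_mem_adSet (gr : C.Grading G) {k : C.I} (hk : k ∈ C.adSet) :
    gr.deg k = 1 := by
  induction hk with
  | base h =>
    obtain ⟨i, hi⟩ := h
    rw [gr.deg_mul _ _ _ hi, gr.deg_dual, mul_inv_cancel]
  | one => exact gr.deg_one
  | dual _ ih => rw [gr.deg_dual, ih, inv_one]
  | mul _ _ hN ihi ihj => rw [gr.deg_mul _ _ _ hN, ihi, ihj, mul_one]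

def invertibleDegrees (gr : C.Grading G) : Subgroup G where
  carrier := {d | ∃ u, C.dim u = 1 ∧ gr.deg u = d}
  mul_mem' := by
    rintro _ _ ⟨u, hu, rfl⟩ ⟨v, hv, rfl⟩
    exact ⟨C.act u v, by rw [dim_act hu, hv], gr.deg_act u v⟩
  one_mem' := ⟨C.one, C.dim_one, gr.deg_one⟩
  inv_mem' := by
    rintro _ ⟨u, hu, rfl⟩
    exact ⟨C.dual u, by rw [C.dim_dual, hu], gr.deg_dual u⟩

def degreesOfType (gr : C.Grading G) (a : ℝ) (T : Finset C.I) : Set G :=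
  {d | d = 1 ∨ ∃ Y, gr.deg Y = d ∧ C.dim Y = a ∧ C.stabilizer Y = T}

section PointedTrivialComponent

variable {gr : C.Grading G} (hpt : ∀ i, gr.deg i = 1 → C.dim i = 1)
include hpt

lemma adjointGenerators_subset_ptSet : C.adjointGenerators ⊆ C.ptSet := fun _ ⟨_, hi⟩ =>
  hpt _ (by rw [gr.deg_mul _ _ _ hi, gr.deg_dual, mul_inv_cancel])

lemma exists_act_eq_of_deg_eq {X Y : C.I} (h : gr.deg X = gr.deg Y) :
    ∃ g, C.dim g = 1 ∧ C.act g X = Y := by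
  obtain ⟨g, hg⟩ := exists_N_pos X (C.dual Y)
  have hg1 : C.dim (C.dual g) = 1 := by
    rw [C.dim_dual]
    exact hpt g (by rw [gr.deg_mul _ _ _ hg, gr.deg_dual, h, mul_inv_cancel])
  rw [N_dual_right] at hg
  exact ⟨C.dual g, hg1, (eq_act_of_N_pos hg1 hg).symm⟩

lemma dim_eq_and_stabilizer_eq_of_deg_eq (hbr : C.Braided) {X Y : C.I}
    (h : gr.deg X = gr.deg Y) : C.dim Y = C.dim X ∧ C.stabilizer Y = C.stabilizer X := by
  obtain ⟨g, hg, rfl⟩ := exists_act_eq_of_deg_eq hpt h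
  exact ⟨dim_act hg X, stabilizer_act hbr hg X⟩

lemma deg_eq_one_of_dim_eq_one [Fact (Nat.card G).Prime] (hnp : ¬ C.Pointed) {u : C.I}
    (hu : C.dim u = 1) : gr.deg u = 1 := by
  rcases (invertibleDegrees gr).eq_bot_or_eq_top_of_prime_card with h | h
  · exact Subgroup.mem_bot.1 (h ▸ ⟨u, hu, rfl⟩)
  · refine absurd (fun X => ?_) hnp
    obtain ⟨v, hv, hvX⟩ : gr.deg X ∈ invertibleDegrees gr := h ▸ Subgroup.mem_top _
    obtain ⟨g, hg, rfl⟩ := exists_act_eq_of_deg_eq hpt hvX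
    rw [dim_act hg, hv]

lemma mul_mem_degreesOfType (hbr : C.Braided) {a : ℝ} (hge : ∀ m, gr.deg m ≠ 1 → a ≤ C.dim m)
    {T : Finset C.I} {d e : G} (hd : d ∈ degreesOfType gr a T) (he : e ∈ degreesOfType gr a T) :
    d * e ∈ degreesOfType gr a T := by
  rcases hd with rfl | ⟨X, rfl, hX, hXs⟩
  · rwa [one_mul]
  rcases he with rfl | ⟨Y, rfl, hY, hYs⟩
  · rw [mul_one]
    exact Or.inr ⟨X, rfl, hX, hXs⟩
  by_cases hXY : gr.deg X * gr.deg Y = 1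
  · exact Or.inl hXY
  have hYX : gr.deg Y * gr.deg X ≠ 1 := mt mul_eq_one_comm.1 hXY
  obtain ⟨Z, hZ, hZd, hZs⟩ := exists_N_pos_dim_eq_stabilizer_eq hbr
    (adjointGenerators_subset_ptSet hpt) (hY.trans hX.symm) (hYs.trans hXs.symm)
    (fun m hm => hX ▸ hge m (by rwa [gr.deg_mul _ _ _ hm]))
    (fun m hm => hX ▸ hge m (by
      rwa [gr.deg_mul _ _ _ hm, gr.deg_dual, gr.deg_dual, ← mul_inv_rev, inv_ne_one]))
  exact Or.inr ⟨Z, gr.deg_mul _ _ _ hZ, hZd.trans hX, hZs.trans hXs⟩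

lemma inv_mem_degreesOfType (hbr : C.Braided) {a : ℝ} {T : Finset C.I} {d : G}
    (hd : d ∈ degreesOfType gr a T) : d⁻¹ ∈ degreesOfType gr a T := by
  rcases hd with rfl | ⟨X, rfl, hX, hXs⟩
  · exact Or.inl inv_one
  · exact Or.inr ⟨C.dual X, gr.deg_dual X, by rw [C.dim_dual, hX],
      by rw [stabilizer_dual hbr (adjointGenerators_subset_ptSet hpt), hXs]⟩

theorem dim_eq_and_stabilizer_eq_of_dim_ne_one [Fact (Nat.card G).Prime] (hbr : C.Braided)
    {X₀ : C.I} (hX₀ : C.dim X₀ ≠ 1) (hleast : ∀ i, C.dim i ≠ 1 → C.dim X₀ ≤ C.dim i)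
    {X : C.I} (hX : C.dim X ≠ 1) :
    C.dim X = C.dim X₀ ∧ C.stabilizer X = C.stabilizer X₀ := by
  have hge : ∀ m, gr.deg m ≠ 1 → C.dim X₀ ≤ C.dim m := fun m hm =>
    hleast m (mt (deg_eq_one_of_dim_eq_one hpt fun h => hX₀ (h X₀)) hm)
  let S : Subgroup G :=
    { carrier := degreesOfType gr (C.dim X₀) (C.stabilizer X₀)
      mul_mem' := mul_mem_degreesOfType hpt hbr hge
      one_mem' := Or.inl rfl
      inv_mem' := inv_mem_degreesOfType hpt hbr }
  have hS : S = ⊤ := S.eq_bot_or_eq_top_of_prime_card.resolve_left fun h =>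
    hX₀ (hpt X₀ (Subgroup.mem_bot.1 (h ▸ Or.inr ⟨X₀, rfl, rfl, rfl⟩)))
  obtain hX1 | ⟨Y, hY, hYd, hYs⟩ : gr.deg X ∈ S := hS ▸ Subgroup.mem_top _
  · exact absurd (hpt X hX1) hX
  · obtain ⟨hd, hs⟩ := dim_eq_and_stabilizer_eq_of_deg_eq hpt hbr hY
    exact ⟨hd.trans hYd, hs.trans hYs⟩

end PointedTrivialComponent

end Graded

lemma FPdimSet_coe_of_dim_eq_one (S : Finset C.I) (hS : ∀ i ∈ S, C.dim i = 1) :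
    C.FPdimSet ↑S = S.card := by
  simp only [FPdimSet, mem_coe, ← sum_filter, filter_univ_mem]
  rw [card_eq_sum_ones, Nat.cast_sum]
  exact sum_congr rfl fun i hi => by simp [hS i hi]

lemma adSet_eq_stabilizer (hadj : C.adjointGenerators ⊆ C.ptSet) {X₀ : C.I}
    (h : ∀ X, C.dim X ≠ 1 → C.stabilizer X = C.stabilizer X₀) :
    C.adSet = ↑(C.stabilizer X₀) := by
  have hadj' : ∀ W g, 0 < C.N W (C.dual W) g → C.dim g = 1 := fun W g hg => hadj ⟨W, hg⟩
  have hsub : ∀ X, C.stabilizer X ⊆ C.stabilizer X₀ := by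
    intro X
    by_cases hX : C.dim X = 1
    · rw [stabilizer_eq_singleton_one (hadj' X) hX, singleton_subset_iff]
      exact one_mem_stabilizer X₀
    · exact (h X hX).subset
  ext k
  refine ⟨fun hk => ?_, fun hk => gen.base ⟨X₀, (N_self_dual_pos_iff (hadj' X₀)).2 hk⟩⟩
  induction hk with
  | base hk =>
    obtain ⟨i, hi⟩ := hk
    exact hsub i ((N_self_dual_pos_iff (hadj' i)).1 hi)
  | one => exact one_mem_stabilizer X₀
  | dual _ ih => exact dual_mem_stabilizer.2 ih
  | mul _ _ hN ihi ihj =>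
    rw [eq_act_of_N_pos (dim_of_mem_stabilizer ihi) hN]
    exact act_mem_stabilizer ihi ihj

end FusionData

open FusionData in
theorem braided_extension_dims_general
    (q : ℕ) (hq : q.Prime) (C : FusionData) (hbr : C.Braided)
    (ext : C.ZqExtension q)
    (α : ℝ) (hα : IsLeast {x : ℝ | 1 < x ∧ ∃ i : C.I, C.dim i = x} α) :
    (∀ i : C.I, C.dim i = 1 ∨ C.dim i = α) ∧
    (∀ k ∈ C.adSet, C.dim k = 1) ∧
    C.FPdimSet C.adSet = α ^ 2 := by
  have : Fact (Nat.card (Multiplicative (ZMod q))).Prime :=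
    ⟨by rwa [Nat.card_congr Multiplicative.toAdd, Nat.card_zmod]⟩
  obtain ⟨⟨h1α, X₀, rfl⟩, hleast⟩ := hα
  have hpt := ext.trivial_pointed
  have key : ∀ X, C.dim X ≠ 1 → C.dim X = C.dim X₀ ∧ C.stabilizer X = C.stabilizer X₀ :=
    fun X => dim_eq_and_stabilizer_eq_of_dim_ne_one hpt hbr h1α.ne'
      (fun i hi => hleast ⟨(C.dim_ge_one i).lt_of_ne' hi, i, rfl⟩)
  have hadj := adjointGenerators_subset_ptSet hpt
  have had := adSet_eq_stabilizer hadj fun X hX => (key X hX).2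
  refine ⟨fun i => or_iff_not_imp_left.2 fun hi => (key i hi).1,
    fun k hk => hpt k (ext.grading.deg_eq_one_of_mem_adSet hk), ?_⟩
  rw [had, FPdimSet_coe_of_dim_eq_one _ fun g hg => dim_of_mem_stabilizer hg,
    sq_dim_eq_card_stabilizer fun g hg => hadj ⟨X₀, hg⟩]

open FusionData in
/-- In a non-pointed braided `ℤ_q`-extension of a pointed fusion
category (`q` prime), every simple has FP dimension `1` or `α` (the least FP
dimension `> 1` of a simple) and `C_ad` is pointed of FP dimension `α²`. -/
theorem braided_extension_dims
    (q : ℕ) (hq : q.Prime) (C : FusionData) (hbr : C.Braided)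
    (ext : C.ZqExtension q) (hnp : ¬ C.Pointed)
    (α : ℝ) (hα : IsLeast {x : ℝ | 1 < x ∧ ∃ i : C.I, C.dim i = x} α) :
    (∀ i : C.I, C.dim i = 1 ∨ C.dim i = α) ∧
    (∀ k ∈ C.adSet, C.dim k = 1) ∧
    C.FPdimSet C.adSet = α ^ 2 :=
  braided_extension_dims_general q hq C hbr ext α hα
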